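/- In gl(n+1, ℝ) with n ≥ 2, let a = e_{21} − e_{12}, and for 3 ≤ α ≤ n+1 set k_α = e_{α2} − e_{2α}. Let u_α : ℝ → ℝ be smooth, u = Σ_α u_α k_α, ‖u‖² = Σ_α u_α², and Q_3 = −Σ_α ((u_α)_{xx} + (‖u‖²/2) u_α) k_α + Σ_{α,β} (u_β (u_α)_x − u_α (u_β)_x) e_{αβ}. Then (Q_3)_x + [u, Q_3] = −Σ_α ((u_α)_{xxx} + (3/2) ‖u‖² (u_α)_x) k_α. Consequently, for u_α depending smoothly on (x,t), u satisfies the third flow u_t = (Q_3)_x + [u, Q_3] of the SO(n+1)/SO(n)-hierarchy if and only if the vector function (u_α) satisfies the vector modified KdV equation (u_α)_t = −((u_α)_{xxx} + (3/2) ‖u‖² (u_α)_x) for every α. -/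

import Mathlib

open Matrix Finset
open scoped ContDiff

attribute [local instance] Matrix.frobeniusNormedAddCommGroup Matrix.frobeniusNormedSpace

private lemma comm_kk {N : ℕ} (i j o : Fin N) (hio : i ≠ o) (hjo : j ≠ o) :
    (Matrix.single i o (1:ℝ) - Matrix.single o i 1) * (Matrix.single j o 1 - Matrix.single o j 1)
      - (Matrix.single j o 1 - Matrix.single o j 1) * (Matrix.single i o 1 - Matrix.single o i 1)
      = Matrix.single j i 1 - Matrix.single i j 1 := by
  by_cases h : i = j
  · subst h; simp
  · simp only [sub_mul, mul_sub]
    rw [Matrix.single_mul_single_of_ne (i := i) (j := o) (h := hjo.symm),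
      Matrix.single_mul_single_same,
      Matrix.single_mul_single_of_ne (i := o) (j := i) (h := h),
      Matrix.single_mul_single_of_ne (i := o) (j := i) (h := hio),
      Matrix.single_mul_single_of_ne (i := j) (j := o) (h := hio.symm),
      Matrix.single_mul_single_same,
      Matrix.single_mul_single_of_ne (i := o) (j := j) (h := (Ne.symm h)),
      Matrix.single_mul_single_of_ne (i := o) (j := j) (h := hjo)]
    simp only [mul_one, sub_zero, zero_sub]
    try abel

private lemma comm_ke {N : ℕ} (i j k o : Fin N) (hjo : j ≠ o) (hko : k ≠ o) :
    (Matrix.single i o (1:ℝ) - Matrix.single o i 1) * Matrix.single j k 1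
      - Matrix.single j k 1 * (Matrix.single i o 1 - Matrix.single o i 1)
      = -(if i = j then Matrix.single o k 1 else 0)
        - (if k = i then Matrix.single j o 1 else 0) := by
  simp only [sub_mul, mul_sub]
  rw [Matrix.single_mul_single_of_ne (i := i) (j := o) (h := hjo.symm),
    Matrix.single_mul_single_of_ne (i := j) (j := k) (h := hko)]
  by_cases h1 : i = j
  · subst h1
    rw [Matrix.single_mul_single_same, if_pos rfl]
    by_cases h2 : k = i
    · subst h2
      rw [Matrix.single_mul_single_same, if_pos rfl]
      simp only [mul_one, zero_sub]
      try abel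
    · rw [Matrix.single_mul_single_of_ne (i := i) (j := k) (h := h2), if_neg h2]
      simp only [mul_one, zero_sub, sub_zero]
      try abel
  · rw [Matrix.single_mul_single_of_ne (i := o) (j := i) (h := h1), if_neg h1]
    by_cases h2 : k = i
    · subst h2
      rw [Matrix.single_mul_single_same, if_pos rfl]
      simp only [mul_one, zero_sub, sub_zero]
      try abel
    · rw [Matrix.single_mul_single_of_ne (i := j) (j := k) (h := h2), if_neg h2]
      try abel

private lemma core {N m : ℕ} (I : Fin m → Fin N) (o : Fin N)
    (hIo : ∀ α, I α ≠ o) (hInj : Function.Injective I)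
    (u u' u'' u''' : Fin m → ℝ)
    (Q : Matrix (Fin N) (Fin N) ℝ)
    (hQ : Q = -(∑ α, (u'' α + (∑ β, u β ^ 2) / 2 * u α) •
          (Matrix.single (I α) o (1:ℝ) - Matrix.single o (I α) 1))
        + ∑ α, ∑ β, (u β * u' α - u α * u' β) • Matrix.single (I α) (I β) (1:ℝ)) :
    (-(∑ α, (u''' α + ((∑ β, (u' β * u β + u β * u' β)) / 2 * u α
          + (∑ β, u β ^ 2) / 2 * u' α)) •
          (Matrix.single (I α) o (1:ℝ) - Matrix.single o (I α) 1))
      + ∑ α, ∑ β, ((u' β * u' α + u β * u'' α) - (u' α * u' β + u α * u'' β)) •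
          Matrix.single (I α) (I β) (1:ℝ))
    + ((∑ α, u α • (Matrix.single (I α) o (1:ℝ) - Matrix.single o (I α) 1)) * Q
       - Q * ∑ α, u α • (Matrix.single (I α) o (1:ℝ) - Matrix.single o (I α) 1))
    = -(∑ α, (u''' α + (3 / 2 : ℝ) * (∑ β, u β ^ 2) * u' α) •
        (Matrix.single (I α) o (1:ℝ) - Matrix.single o (I α) 1)) := by
  subst hQ
  have hSp : (∑ β, (u' β * u β + u β * u' β)) = 2 * ∑ β, u β * u' β := by
    rw [Finset.mul_sum]
    exact Finset.sum_congr rfl fun β _ => by ring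
  rw [hSp]
  have hcomm : ∀ A : Matrix (Fin N) (Fin N) ℝ,
      (∑ α, u α • (Matrix.single (I α) o (1:ℝ) - Matrix.single o (I α) 1)) * A
        - A * ∑ α, u α • (Matrix.single (I α) o (1:ℝ) - Matrix.single o (I α) 1)
      = ∑ α, u α • ((Matrix.single (I α) o (1:ℝ) - Matrix.single o (I α) 1) * A
          - A * (Matrix.single (I α) o (1:ℝ) - Matrix.single o (I α) 1)) := by
    intro A
    rw [Finset.sum_mul, Finset.mul_sum, ← Finset.sum_sub_distrib]
    exact Finset.sum_congr rfl fun α _ => by rw [smul_mul_assoc, mul_smul_comm, ← smul_sub]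
  rw [hcomm]
  have hinner : ∀ α,
      (Matrix.single (I α) o (1:ℝ) - Matrix.single o (I α) 1) *
          (-(∑ α, (u'' α + (∑ β, u β ^ 2) / 2 * u α) •
              (Matrix.single (I α) o (1:ℝ) - Matrix.single o (I α) 1))
            + ∑ α, ∑ β, (u β * u' α - u α * u' β) • Matrix.single (I α) (I β) (1:ℝ))
        - (-(∑ α, (u'' α + (∑ β, u β ^ 2) / 2 * u α) •
              (Matrix.single (I α) o (1:ℝ) - Matrix.single o (I α) 1))
            + ∑ α, ∑ β, (u β * u' α - u α * u' β) • Matrix.single (I α) (I β) (1:ℝ)) *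
          (Matrix.single (I α) o (1:ℝ) - Matrix.single o (I α) 1)
      = (∑ β, (u'' β + (∑ γ, u γ ^ 2) / 2 * u β) •
            (Matrix.single (I α) (I β) (1:ℝ) - Matrix.single (I β) (I α) 1))
        - (∑ γ, (u γ * u' α - u α * u' γ) • Matrix.single o (I γ) (1:ℝ))
        - (∑ β, (u α * u' β - u β * u' α) • Matrix.single (I β) o (1:ℝ)) := by
    intro α
    calc (Matrix.single (I α) o (1:ℝ) - Matrix.single o (I α) 1) *
          (-(∑ α, (u'' α + (∑ β, u β ^ 2) / 2 * u α) •
              (Matrix.single (I α) o (1:ℝ) - Matrix.single o (I α) 1))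
            + ∑ α, ∑ β, (u β * u' α - u α * u' β) • Matrix.single (I α) (I β) (1:ℝ))
        - (-(∑ α, (u'' α + (∑ β, u β ^ 2) / 2 * u α) •
              (Matrix.single (I α) o (1:ℝ) - Matrix.single o (I α) 1))
            + ∑ α, ∑ β, (u β * u' α - u α * u' β) • Matrix.single (I α) (I β) (1:ℝ)) *
          (Matrix.single (I α) o (1:ℝ) - Matrix.single o (I α) 1)
        = -(∑ β, (u'' β + (∑ γ, u γ ^ 2) / 2 * u β) •
              ((Matrix.single (I α) o (1:ℝ) - Matrix.single o (I α) 1) *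
                  (Matrix.single (I β) o (1:ℝ) - Matrix.single o (I β) 1)
                - (Matrix.single (I β) o (1:ℝ) - Matrix.single o (I β) 1) *
                  (Matrix.single (I α) o (1:ℝ) - Matrix.single o (I α) 1)))
          + ∑ β, ∑ γ, (u γ * u' β - u β * u' γ) •
              ((Matrix.single (I α) o (1:ℝ) - Matrix.single o (I α) 1) *
                  Matrix.single (I β) (I γ) (1:ℝ)
                - Matrix.single (I β) (I γ) (1:ℝ) *
                  (Matrix.single (I α) o (1:ℝ) - Matrix.single o (I α) 1)) := by
          simp only [mul_add, add_mul, mul_sub, sub_mul, mul_neg, neg_mul,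
            Finset.mul_sum, Finset.sum_mul, mul_smul_comm, smul_mul_assoc,
            smul_sub, smul_add, smul_neg, Finset.sum_sub_distrib,
            Finset.sum_add_distrib, Finset.sum_neg_distrib, neg_sub, neg_neg, neg_add]
          abel
      _ = -(∑ β, (u'' β + (∑ γ, u γ ^ 2) / 2 * u β) •
              (Matrix.single (I β) (I α) (1:ℝ) - Matrix.single (I α) (I β) 1))
          + ∑ β, ∑ γ, (u γ * u' β - u β * u' γ) •
              (-(if α = β then Matrix.single o (I γ) (1:ℝ) else 0)
                - (if γ = α then Matrix.single (I β) o (1:ℝ) else 0)) := by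
          congr 1
          · congr 1
            refine Finset.sum_congr rfl fun β _ => ?_
            rw [comm_kk (I α) (I β) o (hIo α) (hIo β)]
          · refine Finset.sum_congr rfl fun β _ => Finset.sum_congr rfl fun γ _ => ?_
            rw [comm_ke (I α) (I β) (I γ) o (hIo β) (hIo γ)]
            simp only [hInj.eq_iff]
      _ = (∑ β, (u'' β + (∑ γ, u γ ^ 2) / 2 * u β) •
            (Matrix.single (I α) (I β) (1:ℝ) - Matrix.single (I β) (I α) 1))
          - (∑ γ, (u γ * u' α - u α * u' γ) • Matrix.single o (I γ) (1:ℝ))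
          - (∑ β, (u α * u' β - u β * u' α) • Matrix.single (I β) o (1:ℝ)) := by
          have e1 : -(∑ β, (u'' β + (∑ γ, u γ ^ 2) / 2 * u β) •
                (Matrix.single (I β) (I α) (1:ℝ) - Matrix.single (I α) (I β) 1))
              = ∑ β, (u'' β + (∑ γ, u γ ^ 2) / 2 * u β) •
                (Matrix.single (I α) (I β) (1:ℝ) - Matrix.single (I β) (I α) 1) := by
            rw [← Finset.sum_neg_distrib]
            exact Finset.sum_congr rfl fun β _ => by rw [← smul_neg, neg_sub]
          have e2 : (∑ β, ∑ γ, (u γ * u' β - u β * u' γ) •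
                (-(if α = β then Matrix.single o (I γ) (1:ℝ) else 0)
                  - (if γ = α then Matrix.single (I β) o (1:ℝ) else 0)))
              = -(∑ γ, (u γ * u' α - u α * u' γ) • Matrix.single o (I γ) (1:ℝ))
                - (∑ β, (u α * u' β - u β * u' α) • Matrix.single (I β) o (1:ℝ)) := by
            simp only [smul_sub, smul_neg, smul_ite, smul_zero,
              Finset.sum_sub_distrib, Finset.sum_neg_distrib]
            have g1 : (∑ β, ∑ γ, (if α = β then (u γ * u' β - u β * u' γ) •
                  Matrix.single o (I γ) (1:ℝ) else 0))
                = ∑ γ, (u γ * u' α - u α * u' γ) • Matrix.single o (I γ) (1:ℝ) := by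
              calc (∑ β, ∑ γ, (if α = β then (u γ * u' β - u β * u' γ) •
                      Matrix.single o (I γ) (1:ℝ) else 0))
                  = ∑ β, (if α = β then ∑ γ, (u γ * u' β - u β * u' γ) •
                      Matrix.single o (I γ) (1:ℝ) else 0) :=
                    Finset.sum_congr rfl fun β _ => by split <;> simp
                _ = ∑ γ, (u γ * u' α - u α * u' γ) • Matrix.single o (I γ) (1:ℝ) := by
                    simp
            have g2 : (∑ β, ∑ γ, (if γ = α then (u γ * u' β - u β * u' γ) •
                  Matrix.single (I β) o (1:ℝ) else 0))
                = ∑ β, (u α * u' β - u β * u' α) • Matrix.single (I β) o (1:ℝ) :=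
              Finset.sum_congr rfl fun β _ => by simp
            rw [g1, g2]
          rw [e1, e2]
          abel
  have hsum := Finset.sum_congr (rfl : (univ : Finset (Fin m)) = univ)
    (fun α _ => congrArg (fun M => u α • M) (hinner α))
  rw [hsum]
  simp only [smul_sub, Finset.smul_sum, smul_smul, Finset.sum_sub_distrib]
  have hz' : (∑ α, ∑ β, (u α * (u'' β + (∑ γ, u γ ^ 2) / 2 * u β)) •
          Matrix.single (I α) (I β) (1:ℝ))
      - (∑ α, ∑ β, (u α * (u'' β + (∑ γ, u γ ^ 2) / 2 * u β)) •
          Matrix.single (I β) (I α) (1:ℝ))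
      = -(∑ α, ∑ β, ((u' β * u' α + u β * u'' α) - (u' α * u' β + u α * u'' β)) •
          Matrix.single (I α) (I β) (1:ℝ)) := by
    have h1 : (∑ α, ∑ β, (u α * (u'' β + (∑ γ, u γ ^ 2) / 2 * u β)) •
          Matrix.single (I β) (I α) (1:ℝ))
        = ∑ α, ∑ β, (u β * (u'' α + (∑ γ, u γ ^ 2) / 2 * u α)) •
          Matrix.single (I α) (I β) (1:ℝ) := Finset.sum_comm
    rw [h1]
    simp only [← Finset.sum_sub_distrib, ← Finset.sum_neg_distrib]
    refine Finset.sum_congr rfl fun α _ => Finset.sum_congr rfl fun β _ => ?_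
    rw [← sub_smul, ← neg_smul]
    congr 1
    ring
  have hs2 : (∑ α, ∑ γ, (u α * (u γ * u' α - u α * u' γ)) •
        Matrix.single o (I γ) (1:ℝ))
      = ∑ γ, (u γ * (∑ α, u α * u' α) - (∑ α, u α ^ 2) * u' γ) •
        Matrix.single o (I γ) (1:ℝ) := by
    rw [Finset.sum_comm]
    refine Finset.sum_congr rfl fun γ _ => ?_
    rw [← Finset.sum_smul]
    congr 1
    rw [Finset.mul_sum, Finset.sum_mul, ← Finset.sum_sub_distrib]
    exact Finset.sum_congr rfl fun α _ => by ring
  have hs3 : (∑ α, ∑ β, (u α * (u α * u' β - u β * u' α)) •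
        Matrix.single (I β) o (1:ℝ))
      = ∑ β, ((∑ α, u α ^ 2) * u' β - u β * (∑ α, u α * u' α)) •
        Matrix.single (I β) o (1:ℝ) := by
    rw [Finset.sum_comm]
    refine Finset.sum_congr rfl fun β _ => ?_
    rw [← Finset.sum_smul]
    congr 1
    rw [Finset.sum_mul, Finset.mul_sum, ← Finset.sum_sub_distrib]
    exact Finset.sum_congr rfl fun α _ => by ring
  have hB1 : (∑ α, (u''' α + (3 / 2 : ℝ) * (∑ β, u β ^ 2) * u' α) •
        Matrix.single (I α) o (1:ℝ))
      = (∑ α, (u''' α + (2 * (∑ β, u β * u' β) / 2 * u α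
            + (∑ β, u β ^ 2) / 2 * u' α)) • Matrix.single (I α) o (1:ℝ))
        + ∑ β, ((∑ α, u α ^ 2) * u' β - u β * (∑ α, u α * u' α)) •
            Matrix.single (I β) o (1:ℝ) := by
    rw [← Finset.sum_add_distrib]
    refine Finset.sum_congr rfl fun α _ => ?_
    rw [← add_smul]
    congr 1
    ring
  have hB2 : (∑ α, (u''' α + (3 / 2 : ℝ) * (∑ β, u β ^ 2) * u' α) •
        Matrix.single o (I α) (1:ℝ))
      = (∑ α, (u''' α + (2 * (∑ β, u β * u' β) / 2 * u α
            + (∑ β, u β ^ 2) / 2 * u' α)) • Matrix.single o (I α) (1:ℝ))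
        - ∑ γ, (u γ * (∑ α, u α * u' α) - (∑ α, u α ^ 2) * u' γ) •
            Matrix.single o (I γ) (1:ℝ) := by
    rw [← Finset.sum_sub_distrib]
    refine Finset.sum_congr rfl fun α _ => ?_
    rw [← sub_smul]
    congr 1
    ring
  rw [hz', hs2, hs3, hB1, hB2]
  abel

private lemma auxlem (n : ℕ) (hn : 2 ≤ n)
    (kmat : Fin (n - 1) → Matrix (Fin (n + 1)) (Fin (n + 1)) ℝ)
    (hkmat : ∀ α : Fin (n - 1), kmat α
      = Matrix.single ⟨(α : ℕ) + 2, Nat.succ_lt_succ (by have := α.isLt; omega)⟩ ⟨1, Nat.succ_lt_succ (by omega)⟩ 1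
        - Matrix.single ⟨1, Nat.succ_lt_succ (by omega)⟩ ⟨(α : ℕ) + 2, Nat.succ_lt_succ (by have := α.isLt; omega)⟩ 1)
    (emat : Fin (n - 1) → Fin (n - 1) → Matrix (Fin (n + 1)) (Fin (n + 1)) ℝ)
    (hemat : ∀ α β : Fin (n - 1), emat α β
      = Matrix.single ⟨(α : ℕ) + 2, Nat.succ_lt_succ (by have := α.isLt; omega)⟩
          ⟨(β : ℕ) + 2, Nat.succ_lt_succ (by have := β.isLt; omega)⟩ 1)
    (uu : Fin (n - 1) → ℝ → ℝ)
    (huu : ∀ α, ContDiff ℝ ∞ (uu α))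
    (U : ℝ → Matrix (Fin (n + 1)) (Fin (n + 1)) ℝ)
    (hU : ∀ s : ℝ, U s = ∑ α, uu α s • kmat α)
    (Q3 : ℝ → Matrix (Fin (n + 1)) (Fin (n + 1)) ℝ)
    (hQ3 : ∀ s : ℝ, Q3 s
      = -(∑ α, (deriv (deriv (uu α)) s + ((∑ β, uu β s ^ 2) / 2) * uu α s) • kmat α)
        + ∑ α, ∑ β,
            (uu β s * deriv (uu α) s - uu α s * deriv (uu β) s) • emat α β) :
    ∀ s : ℝ,
      deriv Q3 s + (U s * Q3 s - Q3 s * U s)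
        = -(∑ α, (deriv (deriv (deriv (uu α))) s
            + (3 / 2 : ℝ) * (∑ β, uu β s ^ 2) * deriv (uu α) s) • kmat α) := by
  intro s
  have hle : (1 : WithTop ℕ∞) ≤ ∞ := by exact_mod_cast (le_top : (1:ℕ∞) ≤ ⊤)
  have hdiff0 : ∀ α, Differentiable ℝ (uu α) := fun α => (huu α).differentiable (by simp)
  have hcd1 : ∀ α, ContDiff ℝ ∞ (deriv (uu α)) :=
    fun α => (contDiff_infty_iff_deriv.mp (huu α)).2
  have hdiff1 : ∀ α, Differentiable ℝ (deriv (uu α)) :=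
    fun α => (hcd1 α).differentiable (by simp)
  have hdiff2 : ∀ α, Differentiable ℝ (deriv (deriv (uu α))) :=
    fun α => ((contDiff_infty_iff_deriv.mp (hcd1 α)).2).differentiable (by simp)
  have h0 : ∀ α, HasDerivAt (uu α) (deriv (uu α) s) s :=
    fun α => (hdiff0 α s).hasDerivAt
  have h1 : ∀ α, HasDerivAt (deriv (uu α)) (deriv (deriv (uu α)) s) s :=
    fun α => (hdiff1 α s).hasDerivAt
  have h2 : ∀ α, HasDerivAt (deriv (deriv (uu α))) (deriv (deriv (deriv (uu α))) s) s :=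
    fun α => (hdiff2 α s).hasDerivAt
  have hS : HasDerivAt (fun r => ∑ β, uu β r ^ 2)
      (∑ β, (deriv (uu β) s * uu β s + uu β s * deriv (uu β) s)) s :=
    HasDerivAt.fun_sum fun β _ => by simpa [pow_two] using (h0 β).fun_mul (h0 β)
  have hc : ∀ α, HasDerivAt
      (fun r => deriv (deriv (uu α)) r + (∑ β, uu β r ^ 2) / 2 * uu α r)
      (deriv (deriv (deriv (uu α))) s
        + ((∑ β, (deriv (uu β) s * uu β s + uu β s * deriv (uu β) s)) / 2 * uu α s
          + (∑ β, uu β s ^ 2) / 2 * deriv (uu α) s)) s :=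
    fun α => (h2 α).add ((hS.div_const 2).mul (h0 α))
  have hd : ∀ α β, HasDerivAt
      (fun r => uu β r * deriv (uu α) r - uu α r * deriv (uu β) r)
      ((deriv (uu β) s * deriv (uu α) s + uu β s * deriv (deriv (uu α)) s)
        - (deriv (uu α) s * deriv (uu β) s + uu α s * deriv (deriv (uu β)) s)) s :=
    fun α β => ((h0 β).mul (h1 α)).sub ((h0 α).mul (h1 β))
  have hQd : HasDerivAt
      (fun r => -(∑ α, (deriv (deriv (uu α)) r + (∑ β, uu β r ^ 2) / 2 * uu α r) • kmat α)
        + ∑ α, ∑ β, (uu β r * deriv (uu α) r - uu α r * deriv (uu β) r) • emat α β)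
      (-(∑ α, (deriv (deriv (deriv (uu α))) s
          + ((∑ β, (deriv (uu β) s * uu β s + uu β s * deriv (uu β) s)) / 2 * uu α s
            + (∑ β, uu β s ^ 2) / 2 * deriv (uu α) s)) • kmat α)
        + ∑ α, ∑ β, ((deriv (uu β) s * deriv (uu α) s + uu β s * deriv (deriv (uu α)) s)
            - (deriv (uu α) s * deriv (uu β) s + uu α s * deriv (deriv (uu β)) s))
          • emat α β) s :=
    ((HasDerivAt.fun_sum fun α _ => (hc α).smul_const (kmat α)).neg).add
      (HasDerivAt.fun_sum fun α _ => HasDerivAt.fun_sum fun β _ => (hd α β).smul_const (emat α β))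
  have hQeq : Q3 = fun r =>
      -(∑ α, (deriv (deriv (uu α)) r + (∑ β, uu β r ^ 2) / 2 * uu α r) • kmat α)
        + ∑ α, ∑ β, (uu β r * deriv (uu α) r - uu α r * deriv (uu β) r) • emat α β :=
    funext hQ3
  rw [hQeq]
  beta_reduce
  erw [hQd.deriv]
  rw [hU s]
  simp only [hkmat, hemat]
  exact core (fun α => ⟨(α : ℕ) + 2, Nat.succ_lt_succ (by have := α.isLt; omega)⟩) ⟨1, Nat.succ_lt_succ (by omega)⟩
    (fun α => Fin.ne_of_val_ne (by show (α : ℕ) + 2 ≠ 1; omega))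
    (fun α β h => by
      have h2 : (α : ℕ) + 2 = (β : ℕ) + 2 := congrArg Fin.val h
      exact Fin.ext (by omega))
    (fun α => uu α s) (fun α => deriv (uu α) s) (fun α => deriv (deriv (uu α)) s)
    (fun α => deriv (deriv (deriv (uu α))) s) _ rfl

/-- In `gl(n+1, ℝ)` with `n ≥ 2`, let `a = e₂₁ − e₁₂`, `k_α = e_{α2} − e_{2α}` for
`3 ≤ α ≤ n+1` (indexed here by `α : Fin (n-1)`).  For smooth `u_α : ℝ → ℝ`, set
`u = Σ_α u_α k_α`, `‖u‖² = Σ_α u_α²` and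
`Q₃ = −Σ_α ((u_α)_xx + (‖u‖²/2) u_α) k_α + Σ_{α,β} (u_β (u_α)_x − u_α (u_β)_x) e_{αβ}`.
Then `(Q₃)_x + [u, Q₃] = −Σ_α ((u_α)_xxx + (3/2) ‖u‖² (u_α)_x) k_α`.  Consequently, for
`u_α` depending smoothly on `(x,t)`, `u` satisfies the third flow
`u_t = (Q₃)_x + [u, Q₃]` iff `(u_α)` satisfies the vector modified KdV equation
`(u_α)_t = −((u_α)_xxx + (3/2) ‖u‖² (u_α)_x)` for every `α`. -/
theorem stmt_15 (n : ℕ) (hn : 2 ≤ n)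
    (a : Matrix (Fin (n + 1)) (Fin (n + 1)) ℝ)
    (ha : a = Matrix.single ⟨1, by omega⟩ ⟨0, by omega⟩ 1
      - Matrix.single ⟨0, by omega⟩ ⟨1, by omega⟩ 1)
    (kmat : Fin (n - 1) → Matrix (Fin (n + 1)) (Fin (n + 1)) ℝ)
    (hkmat : ∀ α : Fin (n - 1), kmat α
      = Matrix.single ⟨(α : ℕ) + 2, by have := α.isLt; omega⟩ ⟨1, by omega⟩ 1
        - Matrix.single ⟨1, by omega⟩ ⟨(α : ℕ) + 2, by have := α.isLt; omega⟩ 1)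
    (emat : Fin (n - 1) → Fin (n - 1) → Matrix (Fin (n + 1)) (Fin (n + 1)) ℝ)
    (hemat : ∀ α β : Fin (n - 1), emat α β
      = Matrix.single ⟨(α : ℕ) + 2, by have := α.isLt; omega⟩
          ⟨(β : ℕ) + 2, by have := β.isLt; omega⟩ 1)
    (uu : Fin (n - 1) → ℝ → ℝ)
    (huu : ∀ α, ContDiff ℝ ∞ (uu α))
    (U : ℝ → Matrix (Fin (n + 1)) (Fin (n + 1)) ℝ)
    (hU : ∀ s : ℝ, U s = ∑ α, uu α s • kmat α)
    (Q3 : ℝ → Matrix (Fin (n + 1)) (Fin (n + 1)) ℝ)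
    (hQ3 : ∀ s : ℝ, Q3 s
      = -(∑ α, (deriv (deriv (uu α)) s + ((∑ β, uu β s ^ 2) / 2) * uu α s) • kmat α)
        + ∑ α, ∑ β,
            (uu β s * deriv (uu α) s - uu α s * deriv (uu β) s) • emat α β)
    -- data for the two-variable (flow) statement:
    (vv : Fin (n - 1) → ℝ → ℝ → ℝ)
    (hvv : ∀ α, ContDiff ℝ ∞ (Function.uncurry (vv α)))
    (V : ℝ → ℝ → Matrix (Fin (n + 1)) (Fin (n + 1)) ℝ)
    (hV : ∀ x t : ℝ, V x t = ∑ α, vv α x t • kmat α)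
    (R3 : ℝ → ℝ → Matrix (Fin (n + 1)) (Fin (n + 1)) ℝ)
    (hR3 : ∀ x t : ℝ, R3 x t
      = -(∑ α, (deriv (deriv (fun s => vv α s t)) x
            + ((∑ β, vv β x t ^ 2) / 2) * vv α x t) • kmat α)
        + ∑ α, ∑ β,
            (vv β x t * deriv (fun s => vv α s t) x
              - vv α x t * deriv (fun s => vv β s t) x) • emat α β) :
    (∀ s : ℝ,
        deriv Q3 s + (U s * Q3 s - Q3 s * U s)
          = -(∑ α, (deriv (deriv (deriv (uu α))) s
              + (3 / 2 : ℝ) * (∑ β, uu β s ^ 2) * deriv (uu α) s) • kmat α)) ∧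
      ((∀ x t : ℝ,
          deriv (fun s => V x s) t
            = deriv (fun s => R3 s t) x + (V x t * R3 x t - R3 x t * V x t))
        ↔ (∀ (α : Fin (n - 1)) (x t : ℝ),
            deriv (fun s => vv α x s) t
              = -(deriv (deriv (deriv (fun s => vv α s t))) x
                + (3 / 2 : ℝ) * (∑ β, vv β x t ^ 2)
                    * deriv (fun s => vv α s t) x))) := by
  have hle : (1 : WithTop ℕ∞) ≤ ∞ := by exact_mod_cast (le_top : (1:ℕ∞) ≤ ⊤)
  refine ⟨auxlem n hn kmat hkmat emat hemat uu huu U hU Q3 hQ3, ?_⟩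
  have key : ∀ t x : ℝ,
      deriv (fun s => R3 s t) x + (V x t * R3 x t - R3 x t * V x t)
        = -(∑ α, (deriv (deriv (deriv (fun s => vv α s t))) x
            + (3 / 2 : ℝ) * (∑ β, vv β x t ^ 2) * deriv (fun s => vv α s t) x) • kmat α) :=
    fun t => auxlem n hn kmat hkmat emat hemat (fun α s => vv α s t)
      (fun α => (hvv α).comp (contDiff_id.prodMk contDiff_const))
      (fun x => V x t) (fun x => hV x t) (fun x => R3 x t) (fun x => hR3 x t)
  have hdifft : ∀ (α : Fin (n - 1)) (x : ℝ), Differentiable ℝ (fun s => vv α x s) :=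
    fun α x => ((hvv α).comp (contDiff_const.prodMk contDiff_id)).differentiable (by simp)
  have hVd : ∀ x t : ℝ, deriv (fun s => V x s) t
      = ∑ α, deriv (fun s => vv α x s) t • kmat α := by
    intro x t
    have hfun : (fun s => V x s) = fun s => ∑ α, vv α x s • kmat α :=
      funext fun s => hV x s
    rw [hfun]
    exact (HasDerivAt.fun_sum fun α _ => ((hdifft α x t).hasDerivAt.smul_const (kmat α))).deriv
  have hfa1 : ∀ m : ℕ, ((1 : ℕ) = m + 2) = False := fun m => eq_false (by omega)
  have hfa2 : ∀ m : ℕ, (m + 2 = (1 : ℕ)) = False := fun m => eq_false (by omega)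
  have coeff : ∀ f g : Fin (n - 1) → ℝ,
      (∑ α, f α • kmat α) = (∑ α, g α • kmat α) → ∀ α, f α = g α := by
    intro f g h α
    have h2 := congrFun (congrFun h ⟨(α : ℕ) + 2, by have := α.isLt; omega⟩) ⟨1, by omega⟩
    simp only [hkmat, Matrix.sum_apply, Matrix.sub_apply, Matrix.smul_apply,
      smul_eq_mul, Matrix.single, Matrix.of_apply, Fin.mk.injEq,
      add_left_inj, Fin.val_inj, and_true, hfa1, hfa2, false_and, and_false,
      if_true, if_false, mul_ite, mul_one, mul_zero, sub_zero, zero_sub,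
      Finset.sum_ite_eq', Finset.mem_univ] at h2
    exact h2
  constructor
  · intro h α x t
    have h1 := h x t
    rw [key t x, hVd x t] at h1
    have h2 : -(∑ α, (deriv (deriv (deriv (fun s => vv α s t))) x
          + (3 / 2 : ℝ) * (∑ β, vv β x t ^ 2) * deriv (fun s => vv α s t) x) • kmat α)
        = ∑ α, (-(deriv (deriv (deriv (fun s => vv α s t))) x
          + (3 / 2 : ℝ) * (∑ β, vv β x t ^ 2) * deriv (fun s => vv α s t) x)) • kmat α := by
      rw [← Finset.sum_neg_distrib]
      exact Finset.sum_congr rfl fun α _ => (neg_smul _ _).symm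
    rw [h2] at h1
    exact coeff _ _ h1 α
  · intro h x t
    rw [key t x, hVd x t]
    calc (∑ α, deriv (fun s => vv α x s) t • kmat α)
        = ∑ α, (-(deriv (deriv (deriv (fun s => vv α s t))) x
            + (3 / 2 : ℝ) * (∑ β, vv β x t ^ 2) * deriv (fun s => vv α s t) x)) • kmat α :=
          Finset.sum_congr rfl fun α _ => by rw [h α x t]
      _ = -(∑ α, (deriv (deriv (deriv (fun s => vv α s t))) x
            + (3 / 2 : ℝ) * (∑ β, vv β x t ^ 2) * deriv (fun s => vv α s t) x) • kmat α) := by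
          simp only [neg_smul, Finset.sum_neg_distrib]
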